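/- arXiv:1908.01001 — 8 statements merged into one kernel-verified Lean document; each statement's English description precedes it below -/
import Mathlib

section
/- If v is a nonzero vector in the vector space GF(2)^n whose support (set of nonzero coordinates) has size s with 1 ≤ s ≤ n, then the degree of v in the non-zero component graph G(V) equals (2^s - 1)·2^(n-s) - 1. -/
/-- Vectors in GF(q)^n. -/
abbrev Vec (n q : ℕ) := Fin n → ZMod q

/-- Support of a vector: indices of nonzero coordinates. -/
def supp {n q : ℕ} (v : Vec n q) : Finset (Fin n) :=
  Finset.univ.filter (fun i => v i ≠ 0)

/-- Vertices of the non-zero component graph: nonzero vectors. -/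
abbrev Vtx (n q : ℕ) := {v : Vec n q // v ≠ 0}

/-- The non-zero component graph: distinct nonzero vectors adjacent iff supports intersect. -/
def NZC (n q : ℕ) : SimpleGraph (Vtx n q) where
  Adj u v := u ≠ v ∧ ∃ i, u.val i ≠ 0 ∧ v.val i ≠ 0
  symm := ⟨fun u v ⟨h, i, hu, hv⟩ => ⟨h.symm, i, hv, hu⟩⟩
  loopless := ⟨fun u h => h.1 rfl⟩

instance {n q : ℕ} : DecidableRel (NZC n q).Adj := fun u v =>
  inferInstanceAs (Decidable (u ≠ v ∧ ∃ i, u.val i ≠ 0 ∧ v.val i ≠ 0))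

/-- The standard basis vector b_l as a vertex of the graph (q = 2). -/
def bVec {n : ℕ} (l : Fin n) : Vtx n 2 :=
  ⟨Pi.single l 1, fun h => one_ne_zero (α := ZMod 2) (by simpa using congrFun h l)⟩

/-- Counting vectors vanishing on a set T of coordinates. -/
lemma count_vanish (n : ℕ) (T : Finset (Fin n)) :
    (Finset.univ.filter (fun w : Vec n 2 => ∀ i ∈ T, w i = 0)).card = 2 ^ (n - T.card) := by
  classical
  rw [← Fintype.card_subtype]
  have e : {w : Vec n 2 // ∀ i ∈ T, w i = 0} ≃ ({i // i ∈ Tᶜ} → ZMod 2) :=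
    { toFun := fun w i => w.val i.val
      invFun := fun f => ⟨fun i => if h : i ∈ Tᶜ then f ⟨i, h⟩ else 0, by
        intro i hi
        simp [Finset.mem_compl, hi]⟩
      left_inv := by
        rintro ⟨w, hw⟩
        ext i
        by_cases h : i ∈ Tᶜ
        · simp [h]
        · simp only [Finset.mem_compl, not_not] at h
          simp [hw i h, Finset.mem_compl, h]
      right_inv := by
        intro f
        ext i
        simp [i.prop] }
  rw [Fintype.card_congr e]
  simp [Finset.card_compl]

theorem stmt_0 (n s : ℕ) (hs1 : 1 ≤ s) (hsn : s ≤ n)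
    (v : Vtx n 2) (hv : (supp v.val).card = s) :
    (NZC n 2).degree v = (2 ^ s - 1) * 2 ^ (n - s) - 1 := by
  classical
  set T : Finset (Fin n) := supp v.val with hT
  set S : Finset (Vec n 2) :=
    Finset.univ.filter (fun w => ∃ i, v.val i ≠ 0 ∧ w i ≠ 0) with hS
  have hdeg : (NZC n 2).degree v = (S.erase v.val).card := by
    rw [← SimpleGraph.card_neighborFinset_eq_degree]
    apply Finset.card_bij (fun u _ => u.val)
    · intro u hu
      rw [SimpleGraph.mem_neighborFinset] at hu
      obtain ⟨hne, i, hvi, hui⟩ := hu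
      refine Finset.mem_erase.mpr ⟨?_, ?_⟩
      · intro h; exact hne (Subtype.ext h.symm)
      · simp only [hS, Finset.mem_filter, Finset.mem_univ, true_and]
        exact ⟨i, hvi, hui⟩
    · intro a ha b hb h; exact Subtype.ext h
    · intro w hw
      rw [Finset.mem_erase] at hw
      obtain ⟨hwv, hwS⟩ := hw
      simp only [hS, Finset.mem_filter, Finset.mem_univ, true_and] at hwS
      obtain ⟨i, hvi, hwi⟩ := hwS
      have hw0 : w ≠ 0 := fun h => hwi (by simp [h])
      refine ⟨⟨w, hw0⟩, ?_, rfl⟩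
      rw [SimpleGraph.mem_neighborFinset]
      exact ⟨fun h => hwv (congrArg Subtype.val h).symm, i, hvi, hwi⟩
  have hvS : v.val ∈ S := by
    have : T.Nonempty := by rw [← Finset.card_pos, hv]; omega
    obtain ⟨i, hi⟩ := this
    simp only [hT, supp, Finset.mem_filter] at hi
    simp only [hS, Finset.mem_filter, Finset.mem_univ, true_and]
    exact ⟨i, hi.2, hi.2⟩
  have hScard : S.card = 2 ^ n - 2 ^ (n - s) := by
    have heq : S = Finset.univ \ Finset.univ.filter (fun w : Vec n 2 => ∀ i ∈ T, w i = 0) := by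
      rw [← Finset.filter_not]
      apply Finset.filter_congr
      intro w _
      simp only [hT, supp, Finset.mem_filter, Finset.mem_univ, true_and]
      push_neg
      constructor
      · rintro ⟨i, hvi, hwi⟩; exact ⟨i, hvi, hwi⟩
      · rintro ⟨i, hvi, hwi⟩; exact ⟨i, hvi, hwi⟩
    rw [heq, Finset.card_sdiff_of_subset (Finset.filter_subset _ _), count_vanish, hv]
    congr 1
    simp [Fintype.card_fun]
  rw [hdeg, Finset.card_erase_of_mem hvS, hScard]
  have hpow : (2 ^ s - 1) * 2 ^ (n - s) = 2 ^ n - 2 ^ (n - s) := by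
    rw [Nat.sub_mul, one_mul, ← pow_add]
    congr 2
    omega
  rw [hpow]
end

section
/- Let V = GF(2)^n. If u and v are nonzero vectors whose supports have different sizes (|S_u| = r ≠ s = |S_v|), then no graph automorphism g of the non-zero component graph G(V) satisfies g(u) = v. -/
/-- Vectors vanishing on `S` are equivalent to functions on the complement of `S`. -/
def vanishEquiv {n : ℕ} (S : Finset (Fin n)) :
    {w : Vec n 2 // ∀ i ∈ S, w i = 0} ≃ ({i : Fin n // i ∉ S} → ZMod 2) where
  toFun w i := w.1 i.1
  invFun f := ⟨fun i => if h : i ∈ S then 0 else f ⟨i, h⟩, by intro i hi; simp [hi]⟩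
  left_inv w := by
    ext i
    by_cases h : i ∈ S
    · simp [h, w.2 i h]
    · simp [h]
  right_inv f := by
    ext i
    simp [i.2]

lemma card_vanish {n : ℕ} (S : Finset (Fin n)) :
    (Finset.univ.filter (fun w : Vec n 2 => ∀ i ∈ S, w i = 0)).card = 2 ^ (n - S.card) := by
  have h1 : (Finset.univ.filter (fun w : Vec n 2 => ∀ i ∈ S, w i = 0)).card
      = Fintype.card {w : Vec n 2 // ∀ i ∈ S, w i = 0} := (Fintype.card_subtype _).symm
  rw [h1, Fintype.card_congr (vanishEquiv S), Fintype.card_fun]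
  congr 1
  · rw [Fintype.card_subtype]
    have : (Finset.univ.filter (fun i : Fin n => i ∉ S)) = Sᶜ := by
      ext i; simp [Finset.mem_compl]
    rw [this, Finset.card_compl, Fintype.card_fin]

/-- Degree formula for the non-zero component graph over GF(2). -/
lemma degree_formula {n : ℕ} (u : Vtx n 2) :
    Fintype.card (Vtx n 2)
      = 1 + (NZC n 2).degree u + (2 ^ (n - (supp u.val).card) - 1) := by
  classical
  set S := supp u.val with hS
  set N : Finset (Vtx n 2) := Finset.univ.filter (fun w => ∀ i ∈ S, w.val i = 0) with hN
  -- card of N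
  have hNcard : N.card = 2 ^ (n - S.card) - 1 := by
    have hmap : N.map (Function.Embedding.subtype _)
        = (Finset.univ.filter (fun w : Vec n 2 => ∀ i ∈ S, w i = 0)).erase 0 := by
      ext w
      simp only [Finset.mem_map, Function.Embedding.coe_subtype, Finset.mem_erase,
        Finset.mem_filter, Finset.mem_univ, true_and, hN]
      constructor
      · rintro ⟨⟨w', hw'⟩, hmem, rfl⟩
        exact ⟨hw', by simpa using hmem⟩
      · rintro ⟨hw0, hvan⟩
        exact ⟨⟨w, hw0⟩, by simpa using hvan, rfl⟩
    have h0 : (0 : Vec n 2) ∈ Finset.univ.filter (fun w : Vec n 2 => ∀ i ∈ S, w i = 0) := by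
      simp
    have := Finset.card_erase_of_mem h0
    rw [← hmap, Finset.card_map] at this
    rw [this, card_vanish]
  -- partition of the vertex set
  have hpart : (Finset.univ : Finset (Vtx n 2))
      = insert u ((NZC n 2).neighborFinset u ∪ N) := by
    ext w
    simp only [Finset.mem_univ, Finset.mem_insert, Finset.mem_union,
      SimpleGraph.mem_neighborFinset, hN, Finset.mem_filter, true_iff, NZC]
    by_cases hwu : w = u
    · exact Or.inl hwu
    · by_cases hvan : ∀ i ∈ S, w.val i = 0
      · exact Or.inr (Or.inr ⟨trivial, hvan⟩)
      · push_neg at hvan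
        obtain ⟨i, hiS, hwi⟩ := hvan
        have hui : u.val i ≠ 0 := by
          simpa [hS, supp] using hiS
        exact Or.inr (Or.inl ((SimpleGraph.mem_neighborFinset _ _ _).mpr ⟨Ne.symm hwu, i, hui, hwi⟩))
  have hdisj : Disjoint ((NZC n 2).neighborFinset u) N := by
    rw [Finset.disjoint_left]
    intro w hw hwN
    rw [SimpleGraph.mem_neighborFinset] at hw
    obtain ⟨_, i, hui, hwi⟩ := hw
    have hiS : i ∈ S := by simpa [hS, supp] using hui
    exact hwi ((Finset.mem_filter.mp hwN).2 i hiS)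
  have hnotmem : u ∉ (NZC n 2).neighborFinset u ∪ N := by
    intro h
    rcases Finset.mem_union.mp h with h | h
    · exact (NZC n 2).loopless.irrefl u (SimpleGraph.mem_neighborFinset _ _ _ |>.mp h)
    · obtain ⟨i, hi⟩ := Function.ne_iff.mp u.2
      have hiS : i ∈ S := by simpa [hS, supp] using hi
      exact hi (by simpa using (Finset.mem_filter.mp h).2 i hiS)
  have := congrArg Finset.card hpart
  rw [Finset.card_insert_of_notMem hnotmem, Finset.card_union_of_disjoint hdisj,
    Finset.card_univ] at this
  rw [this, SimpleGraph.degree, hNcard]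
  ring

theorem stmt_1 (n r s : ℕ) (hrs : r ≠ s)
    (u v : Vtx n 2) (hu : (supp u.val).card = r) (hv : (supp v.val).card = s)
    (g : NZC n 2 ≃g NZC n 2) : g u ≠ v := by
  intro hguv
  have hdeg : (NZC n 2).degree (g u) = (NZC n 2).degree u := by
    rw [← SimpleGraph.card_neighborSet_eq_degree, ← SimpleGraph.card_neighborSet_eq_degree]
    exact Fintype.card_congr (g.mapNeighborSet u).symm
  rw [hguv] at hdeg
  have h1 := degree_formula u
  have h2 := degree_formula v
  rw [hu] at h1
  rw [hv] at h2
  have hrn : r ≤ n := by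
    rw [← hu]
    simpa using Finset.card_le_univ (supp u.val)
  have hsn : s ≤ n := by
    rw [← hv]
    simpa using Finset.card_le_univ (supp v.val)
  have hr1 : 1 ≤ 2 ^ (n - r) := Nat.one_le_two_pow
  have hs1 : 1 ≤ 2 ^ (n - s) := Nat.one_le_two_pow
  have hpow : 2 ^ (n - r) = 2 ^ (n - s) := by omega
  have := Nat.pow_right_injective (le_refl 2) hpow
  omega
end

section
/- Every non-trivial automorphism g of the non-zero component graph of GF(2)^n (n ≥ 2) moves at least one standard basis vector: there exist distinct standard basis vectors b_l, b_m with g(b_l) = b_m. -/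
namespace Stmt7Aux

lemma bVec_apply {n : ℕ} (l i : Fin n) : (bVec l).val i = if i = l then 1 else 0 := by
  simp [bVec, Pi.single_apply]

lemma memr_iff {n : ℕ} (i : Fin n) (v : Vtx n 2) :
    (bVec i = v ∨ (NZC n 2).Adj (bVec i) v) ↔ v.val i ≠ 0 := by
  constructor
  · rintro (rfl | ⟨hne, j, hj1, hj2⟩)
    · simp [bVec_apply]
    · have hji : j = i := by
        by_contra h
        simp [bVec_apply, h] at hj1
      subst hji; exact hj2
  · intro h
    by_cases he : bVec i = v
    · exact Or.inl he
    · exact Or.inr ⟨he, i, by simp [bVec_apply], h⟩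

def R {n : ℕ} (v w : Vtx n 2) : Prop :=
  ∀ u, (u = v ∨ (NZC n 2).Adj u v) → (u = w ∨ (NZC n 2).Adj u w)

lemma R_iff {n : ℕ} (v w : Vtx n 2) :
    R v w ↔ ∀ i, v.val i ≠ 0 → w.val i ≠ 0 := by
  constructor
  · intro h i hi
    have h1 : bVec i = v ∨ (NZC n 2).Adj (bVec i) v := (memr_iff i v).mpr hi
    rcases h _ h1 with h2 | h2
    · exact (memr_iff i w).mp (Or.inl h2)
    · exact (memr_iff i w).mp (Or.inr h2)
  · intro h u hu
    by_cases he : u = w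
    · exact Or.inl he
    · right
      rcases hu with rfl | ⟨_, j, hj1, hj2⟩
      · refine ⟨he, ?_⟩
        obtain ⟨i, hi⟩ := Function.ne_iff.mp u.prop
        exact ⟨i, by simpa using hi, h i (by simpa using hi)⟩
      · exact ⟨he, j, hj1, h j hj2⟩

lemma eq_of_supp {n : ℕ} {v w : Vtx n 2} (h : ∀ i, v.val i ≠ 0 ↔ w.val i ≠ 0) : v = w := by
  apply Subtype.ext
  funext i
  have key : ∀ a b : ZMod 2, (a ≠ 0 ↔ b ≠ 0) → a = b := by decide
  exact key _ _ (h i)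

lemma R_map {n : ℕ} (g : NZC n 2 ≃g NZC n 2) {v w : Vtx n 2} (h : R v w) :
    R (g v) (g w) := by
  intro u hu
  have hu' : g.symm u = v ∨ (NZC n 2).Adj (g.symm u) v := by
    rcases hu with h1 | h1
    · left
      rw [h1]; exact g.symm_apply_apply v
    · right
      have : (NZC n 2).Adj (g (g.symm u)) (g v) := by
        rwa [g.apply_symm_apply]
      exact g.map_adj_iff.mp this
  rcases h _ hu' with h2 | h2
  · left
    rw [← h2, g.apply_symm_apply]
  · right
    have := g.map_adj_iff.mpr h2
    rwa [g.apply_symm_apply] at this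

lemma basis_iff_min {n : ℕ} (v : Vtx n 2) :
    (∃ l, v = bVec l) ↔ ∀ w, R w v → w = v := by
  constructor
  · rintro ⟨l, rfl⟩ w hw
    have hw' := (R_iff w (bVec l)).mp hw
    obtain ⟨j, hj⟩ := Function.ne_iff.mp w.prop
    have hj' : w.val j ≠ 0 := by simpa using hj
    have hjl : j = l := by
      have := hw' j hj'
      by_contra h
      simp [bVec_apply, h] at this
    subst hjl
    apply eq_of_supp
    intro i
    constructor
    · exact hw' i
    · intro hi
      have : i = j := by
        by_contra h
        simp [bVec_apply, h] at hi
      subst this; exact hj'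
  · intro h
    obtain ⟨i, hi⟩ := Function.ne_iff.mp v.prop
    have hi' : v.val i ≠ 0 := by simpa using hi
    have hR : R (bVec i) v := by
      rw [R_iff]
      intro j hj
      have : j = i := by
        by_contra h'
        simp [bVec_apply, h'] at hj
      subst this; exact hi'
    exact ⟨i, (h _ hR).symm⟩

end Stmt7Aux

open Stmt7Aux in
theorem stmt_7 (n : ℕ) (hn : 2 ≤ n) (g : NZC n 2 ≃g NZC n 2)
    (hg : ∃ w : Vtx n 2, g w ≠ w) :
    ∃ l m : Fin n, l ≠ m ∧ g (bVec l) = bVec m := by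
  have hbasis : ∀ l : Fin n, ∃ m, g (bVec l) = bVec m := by
    intro l
    have hmin : ∀ w, R w (g (bVec l)) → w = g (bVec l) := by
      intro w hw
      have h1 : R (g.symm w) (bVec l) := by
        have := R_map g.symm hw
        rwa [g.symm_apply_apply] at this
      have h2 := (basis_iff_min (bVec l)).mp ⟨l, rfl⟩ _ h1
      calc w = g (g.symm w) := (g.apply_symm_apply w).symm
        _ = g (bVec l) := by rw [h2]
    obtain ⟨m, hm⟩ := (basis_iff_min _).mpr hmin
    exact ⟨m, hm⟩
  by_cases hfix : ∀ l : Fin n, g (bVec l) = bVec l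
  · exfalso
    obtain ⟨w, hw⟩ := hg
    apply hw
    apply eq_of_supp
    intro i
    rw [← memr_iff i (g w), ← memr_iff i w]
    constructor
    · rintro (h1 | h1)
      · left
        have : g (bVec i) = g w := by rw [hfix i]; exact h1
        exact g.injective this
      · right
        have : (NZC n 2).Adj (g (bVec i)) (g w) := by rw [hfix i]; exact h1
        exact g.map_adj_iff.mp this
    · rintro (h1 | h1)
      · left
        rw [← hfix i]
        exact congrArg g h1
      · right
        rw [← hfix i]
        exact g.map_adj_iff.mpr h1
  · push_neg at hfix
    obtain ⟨l, hl⟩ := hfix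
    obtain ⟨m, hm⟩ := hbasis l
    refine ⟨l, m, ?_, hm⟩
    rintro rfl
    exact hl hm
end

section
/- Every automorphism of the non-zero component graph of GF(2)^n restricts to a permutation of the set of standard basis vectors. -/
/-- "Neighborhood is a clique" property. -/
def CliqueNbhd (n : ℕ) (v : Vtx n 2) : Prop :=
  ∀ u w, (NZC n 2).Adj v u → (NZC n 2).Adj v w → u ≠ w → (NZC n 2).Adj u w

lemma bVec_apply {n : ℕ} (l i : Fin n) : (bVec l).val i ≠ 0 ↔ i = l := by
  constructor
  · intro h
    by_contra hne
    exact h (by simp [bVec, Pi.single_apply, hne])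
  · rintro rfl; simp [bVec]

lemma bVec_inj {n : ℕ} : Function.Injective (bVec (n := n)) := by
  intro a b h
  have := congrFun (congrArg Subtype.val h) a
  simp [bVec, Pi.single_apply] at this
  by_contra hne
  simp [hne] at this

lemma cliqueNbhd_bVec {n : ℕ} (l : Fin n) : CliqueNbhd n (bVec l) := by
  rintro u w ⟨_, i, hi, hiu⟩ ⟨_, j, hj, hjw⟩ huw
  have hil : i = l := (bVec_apply l i).mp hi
  have hjl : j = l := (bVec_apply l j).mp hj
  exact ⟨huw, l, hil ▸ hiu, hjl ▸ hjw⟩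

lemma cliqueNbhd_imp {n : ℕ} (v : Vtx n 2) (h : CliqueNbhd n v) :
    ∃ l, v = bVec l := by
  obtain ⟨l, hl⟩ : ∃ l, v.val l ≠ 0 := by
    by_contra hc
    push_neg at hc
    exact v.2 (funext fun i => hc i)
  refine ⟨l, ?_⟩
  have hall : ∀ j, j ≠ l → v.val j = 0 := by
    intro j hj
    by_contra hjv
    have hvl : v ≠ bVec l := by
      intro he
      exact hjv (by rw [he]; simp [bVec, Pi.single_apply, hj])
    have hvj : v ≠ bVec j := by
      intro he
      have : v.val l = 0 := by
        rw [he]; simp [bVec, Pi.single_apply, (Ne.symm hj : l ≠ j)]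
      exact hl this
    have h1 : (NZC n 2).Adj v (bVec l) := ⟨hvl, l, hl, by simp [bVec]⟩
    have h2 : (NZC n 2).Adj v (bVec j) := ⟨hvj, j, hjv, by simp [bVec]⟩
    have hne : bVec l ≠ bVec j := fun he => hj (bVec_inj he).symm
    obtain ⟨_, i, hi1, hi2⟩ := h (bVec l) (bVec j) h1 h2 hne
    exact hj (((bVec_apply j i).mp hi2).symm.trans ((bVec_apply l i).mp hi1))
  apply Subtype.ext
  funext i
  rcases eq_or_ne i l with rfl | hne
  · have : v.val i ≠ 0 := hl
    have h1 : v.val i = 1 := by revert this; generalize v.val i = x; revert x; decide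
    simp [bVec, h1]
  · simp [bVec, Pi.single_apply, hne, hall i hne]

theorem stmt_9 (n : ℕ) (g : NZC n 2 ≃g NZC n 2) :
    ∃ τ : Equiv.Perm (Fin n), ∀ l : Fin n, g (bVec l) = bVec (τ l) := by
  have key : ∀ l : Fin n, ∃ m, g (bVec l) = bVec m := by
    intro l
    apply cliqueNbhd_imp
    intro u w hu hw huw
    have h := cliqueNbhd_bVec l (g.symm u) (g.symm w)
      (by rw [← g.map_adj_iff]; simpa using hu)
      (by rw [← g.map_adj_iff]; simpa using hw)
      (fun he => huw (by simpa using congrArg g he))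
    rw [← g.map_adj_iff] at h
    simpa using h
  choose f hf using key
  have hinj : Function.Injective f := by
    intro a b hab
    have : g (bVec a) = g (bVec b) := by rw [hf a, hf b, hab]
    exact bVec_inj (g.injective this)
  exact ⟨Equiv.ofBijective f ((Finite.injective_iff_bijective).mp hinj), hf⟩
end

section
/- For n ≥ 1, the automorphism group of the non-zero component graph of GF(2)^n is isomorphic to the symmetric group S_n, via the map sending a permutation σ of {1,...,n} to the coordinate-permutation automorphism. -/
namespace Stmt10

lemma vtx_ext {n : ℕ} {u v : Vtx n 2} (h : ∀ i, u.val i ≠ 0 ↔ v.val i ≠ 0) : u = v := by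
  apply Subtype.ext; funext i
  have h2 : ∀ x : ZMod 2, x = 0 ∨ x = 1 := by decide
  rcases h2 (u.val i) with h1 | h1 <;> rcases h2 (v.val i) with h3 | h3
  · rw [h1, h3]
  · exact absurd ((h i).mpr (by rw [h3]; exact one_ne_zero)) (by rw [h1]; simp)
  · exact absurd ((h i).mp (by rw [h1]; exact one_ne_zero)) (by rw [h3]; simp)
  · rw [h1, h3]

lemma bVec_val {n : ℕ} (l i : Fin n) : (bVec l).val i ≠ 0 ↔ i = l := by
  simp [bVec, Pi.single_apply]

lemma bVec_inj {n : ℕ} {l m : Fin n} (h : bVec l = bVec m) : l = m := by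
  have := (bVec_val l l).mpr rfl
  rw [h] at this
  exact (bVec_val m l).mp this

/-- closed neighborhood inclusion -/
def le' {n : ℕ} (u v : Vtx n 2) : Prop :=
  ∀ w, ((NZC n 2).Adj w u ∨ w = u) → ((NZC n 2).Adj w v ∨ w = v)

lemma le'_iff {n : ℕ} (u v : Vtx n 2) :
    le' u v ↔ ∀ i, u.val i ≠ 0 → v.val i ≠ 0 := by
  constructor
  · intro h i hi
    have hmem : (NZC n 2).Adj (bVec i) u ∨ bVec i = u := by
      by_cases he : bVec i = u
      · exact Or.inr he
      · exact Or.inl ⟨he, i, (bVec_val i i).mpr rfl, hi⟩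
    rcases h _ hmem with hadj | heq
    · obtain ⟨_, j, hj1, hj2⟩ := hadj
      rwa [(bVec_val i j).mp hj1] at hj2
    · rw [← heq]; exact (bVec_val i i).mpr rfl
  · intro h w hw
    have hex : ∃ i, w.val i ≠ 0 ∧ v.val i ≠ 0 := by
      rcases hw with hadj | heq
      · obtain ⟨_, i, h1, h2⟩ := hadj
        exact ⟨i, h1, h i h2⟩
      · obtain ⟨i, hi⟩ : ∃ i, u.val i ≠ 0 := by
          by_contra hc
          push_neg at hc
          exact u.prop (funext fun i => hc i)
        exact ⟨i, by rw [heq]; exact hi, h i hi⟩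
    by_cases he : w = v
    · exact Or.inr he
    · exact Or.inl ⟨he, hex⟩

lemma le'_map {n : ℕ} (f : NZC n 2 ≃g NZC n 2) (u v : Vtx n 2) :
    le' (f u) (f v) ↔ le' u v := by
  constructor
  · intro h w hw
    have h1 : (NZC n 2).Adj (f w) (f u) ∨ f w = f u := by
      rcases hw with h' | h'
      · exact Or.inl (f.map_adj_iff.mpr h')
      · exact Or.inr (congrArg f h')
    rcases h _ h1 with h' | h'
    · exact Or.inl (f.map_adj_iff.mp h')
    · exact Or.inr (f.toEquiv.injective h')
  · intro h w hw
    have h1 : (NZC n 2).Adj (f.symm w) u ∨ f.symm w = u := by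
      rcases hw with h' | h'
      · left
        have := f.symm.map_adj_iff.mpr h'
        simpa using this
      · right
        rw [h']; exact f.toEquiv.symm_apply_apply u
    rcases h _ h1 with h' | h'
    · left
      have := f.map_adj_iff.mpr h'
      simpa using this
    · right
      rw [← h']
      exact (f.toEquiv.apply_symm_apply w).symm

lemma bVec_le' {n : ℕ} (l : Fin n) (u : Vtx n 2) : le' (bVec l) u ↔ u.val l ≠ 0 := by
  rw [le'_iff]
  constructor
  · intro h; exact h l ((bVec_val l l).mpr rfl)
  · intro h i hi; rwa [(bVec_val l i).mp hi]

lemma exists_supp {n : ℕ} (u : Vtx n 2) : ∃ i, u.val i ≠ 0 := by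
  by_contra hc
  push_neg at hc
  exact u.prop (funext fun i => hc i)

lemma map_bVec {n : ℕ} (f : NZC n 2 ≃g NZC n 2) (l : Fin n) :
    ∃ m, f (bVec l) = bVec m := by
  obtain ⟨m, hm⟩ := exists_supp (f (bVec l))
  refine ⟨m, ?_⟩
  -- show f.symm (bVec m) = bVec l
  have h1 : le' (bVec m) (f (bVec l)) := (bVec_le' m _).mpr hm
  have h2 : le' (f (f.symm (bVec m))) (f (bVec l)) := by
    rwa [f.apply_symm_apply]
  have h3 : le' (f.symm (bVec m)) (bVec l) := (le'_map f _ _).mp h2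
  rw [le'_iff] at h3
  have h4 : f.symm (bVec m) = bVec l := by
    apply vtx_ext
    intro i
    constructor
    · intro hi
      rw [bVec_val]
      exact (bVec_val l i).mp (h3 i hi)
    · intro hi
      obtain ⟨j, hj⟩ := exists_supp (f.symm (bVec m))
      have := (bVec_val l j).mp (h3 j hj)
      rw [(bVec_val l i).mp hi, ← this]
      exact hj
  rw [← h4, f.apply_symm_apply]

/-- the induced vertex map of a permutation -/
def permVtx {n : ℕ} (σ : Equiv.Perm (Fin n)) (u : Vtx n 2) : Vtx n 2 :=
  ⟨fun i => u.val (σ.symm i), by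
    intro h
    apply u.prop
    funext i
    have := congrFun h (σ i)
    simpa using this⟩

lemma permVtx_comp {n : ℕ} (σ τ : Equiv.Perm (Fin n)) (u : Vtx n 2) :
    permVtx σ (permVtx τ u) = permVtx (σ * τ) u := rfl

lemma permVtx_id {n : ℕ} (u : Vtx n 2) : permVtx 1 u = u := rfl

lemma permVtx_symm {n : ℕ} (σ : Equiv.Perm (Fin n)) (u : Vtx n 2) :
    permVtx σ.symm (permVtx σ u) = u := by
  apply Subtype.ext; funext i
  show u.val (σ.symm (σ i)) = _
  rw [Equiv.symm_apply_apply]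

/-- the induced graph automorphism -/
def permIso {n : ℕ} (σ : Equiv.Perm (Fin n)) : NZC n 2 ≃g NZC n 2 where
  toFun := permVtx σ
  invFun := permVtx σ.symm
  left_inv u := by
    exact permVtx_symm σ u
  right_inv u := by
    exact permVtx_symm σ.symm u
  map_rel_iff' := by
    intro u v
    constructor
    · rintro ⟨hne, i, h1, h2⟩
      refine ⟨fun h => hne (by rw [h]), σ.symm i, h1, h2⟩
    · rintro ⟨hne, i, h1, h2⟩
      refine ⟨?_, σ i, ?_, ?_⟩
      · intro h
        apply hne
        rw [← permVtx_symm σ u, ← permVtx_symm σ v]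
        exact congrArg (permVtx σ.symm) h
      · show u.val (σ.symm (σ i)) ≠ 0
        simpa using h1
      · show v.val (σ.symm (σ i)) ≠ 0
        simpa using h2

def Φ {n : ℕ} : Equiv.Perm (Fin n) →* (NZC n 2 ≃g NZC n 2) where
  toFun := permIso
  map_one' := by
    apply RelIso.ext
    intro u
    rfl
  map_mul' σ τ := by
    apply RelIso.ext
    intro u
    rfl

lemma permIso_bVec {n : ℕ} (σ : Equiv.Perm (Fin n)) (l : Fin n) :
    permIso σ (bVec l) = bVec (σ l) := by
  apply vtx_ext
  intro i
  show (bVec l).val (σ.symm i) ≠ 0 ↔ _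
  rw [bVec_val, bVec_val]
  constructor
  · intro h; rw [← h]; simp
  · intro h; rw [h]; simp

lemma Φ_injective {n : ℕ} : Function.Injective (Φ (n := n)) := by
  intro σ τ h
  ext l
  have h1 : permIso σ (bVec l) = permIso τ (bVec l) := by
    show Φ σ (bVec l) = Φ τ (bVec l)
    rw [h]
  rw [permIso_bVec, permIso_bVec] at h1
  exact congrArg Fin.val (bVec_inj h1)

lemma Φ_surjective {n : ℕ} : Function.Surjective (Φ (n := n)) := by
  intro f
  choose s hs using map_bVec f
  choose t ht using map_bVec f.symm
  have hst : ∀ l, t (s l) = l := by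
    intro l
    apply bVec_inj
    rw [← ht (s l), ← hs l, RelIso.symm_apply_apply]
  have hts : ∀ l, s (t l) = l := by
    intro l
    apply bVec_inj
    rw [← hs (t l), ← ht l, RelIso.apply_symm_apply]
  let σ : Equiv.Perm (Fin n) := ⟨s, t, hst, hts⟩
  refine ⟨σ, ?_⟩
  apply RelIso.ext
  intro u
  apply vtx_ext
  intro i
  show (permVtx σ u).val i ≠ 0 ↔ (f u).val i ≠ 0
  have key : u.val (σ.symm i) ≠ 0 ↔ (f u).val i ≠ 0 := by
    rw [← bVec_le' (σ.symm i) u, ← bVec_le' i (f u)]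
    rw [← le'_map f]
    rw [hs (σ.symm i)]
    have : s (σ.symm i) = i := hts i
    rw [this]
  exact key

end Stmt10

theorem stmt_10 (n : ℕ) (hn : 1 ≤ n) :
    ∃ φ : Equiv.Perm (Fin n) ≃* (NZC n 2 ≃g NZC n 2),
      ∀ (σ : Equiv.Perm (Fin n)) (u : Vtx n 2),
        ((φ σ) u).val = fun i => u.val (σ.symm i) := by
  refine ⟨MulEquiv.ofBijective Stmt10.Φ ⟨Stmt10.Φ_injective, Stmt10.Φ_surjective⟩, ?_⟩
  intro σ u
  rfl
end

section
/- An automorphism of the non-zero component graph of GF(2)^n that fixes every standard basis vector is the identity. -/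
theorem stmt_12 (n : ℕ) (g : NZC n 2 ≃g NZC n 2)
    (hg : ∀ l : Fin n, g (bVec l) = bVec l) : ∀ u : Vtx n 2, g u = u := by
  intro u
  by_cases hu : ∃ l, u = bVec l
  · obtain ⟨l, rfl⟩ := hu; exact hg l
  push_neg at hu
  have hgu : ∀ l, g u ≠ bVec l := by
    intro l h
    exact hu l (g.injective (h.trans (hg l).symm))
  apply Subtype.ext
  funext i
  have key : (NZC n 2).Adj u (bVec i) ↔ (NZC n 2).Adj (g u) (bVec i) := by
    conv_rhs => rw [← hg i]
    exact g.map_adj_iff.symm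
  have hb : ∀ j : Fin n, (bVec i).val j ≠ 0 ↔ j = i := by
    intro j
    constructor
    · intro h; by_contra hne
      exact h (Pi.single_eq_of_ne hne 1)
    · rintro rfl; simp [bVec]
  have hAdj : ∀ v : Vtx n 2, v ≠ bVec i → ((NZC n 2).Adj v (bVec i) ↔ v.val i ≠ 0) := by
    intro v hv
    constructor
    · rintro ⟨-, j, hj1, hj2⟩
      rwa [(hb j).mp hj2] at hj1
    · intro h; exact ⟨hv, i, h, by simp [bVec]⟩
  have h1 := hAdj u (hu i)
  have h2 := hAdj (g u) (hgu i)
  have : u.val i ≠ 0 ↔ (g u).val i ≠ 0 := by rw [← h1, ← h2, key]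
  revert this
  generalize (g u).val i = a
  generalize u.val i = b
  intro h
  revert a b
  decide
end

section
/- For n ≥ 3, the distinguishing number of the non-zero component graph of GF(2)^n equals 2: there exists a labeling of the nonzero vectors with 2 labels such that the only label-preserving automorphism is the identity, and no such labeling with 1 label exists. -/
section Aux

variable {n : ℕ}

lemma supp_mem {v : Vec n 2} {i : Fin n} : i ∈ supp v ↔ v i ≠ 0 := by
  simp [supp]

lemma vec2_ext {u v : Vec n 2} (h : supp u = supp v) : u = v := by
  have h2 : ∀ a : ZMod 2, a = 0 ∨ a = 1 := by decide
  funext i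
  have hi : (u i ≠ 0) ↔ (v i ≠ 0) := by
    rw [← supp_mem, ← supp_mem, h]
  rcases h2 (u i) with h1 | h1 <;> rcases h2 (v i) with h3 | h3 <;> simp_all

lemma supp_bVec (l : Fin n) : supp (bVec l).val = {l} := by
  ext i
  by_cases h : i = l <;> simp [supp_mem, bVec, Pi.single_apply, h]

lemma bVec_injective : Function.Injective (bVec (n := n)) := by
  intro a b hab
  have : ({a} : Finset (Fin n)) = {b} := by
    rw [← supp_bVec a, ← supp_bVec b, hab]
  exact Finset.singleton_injective this

lemma exists_supp_ne (v : Vtx n 2) : ∃ i, v.val i ≠ 0 := by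
  by_contra h
  push_neg at h
  exact v.2 (funext fun i => h i)

/-- Closed-neighborhood domination. -/
def Dom (u v : Vtx n 2) : Prop :=
  ∀ w, (w = u ∨ (NZC n 2).Adj w u) → (w = v ∨ (NZC n 2).Adj w v)

lemma dom_iff (u v : Vtx n 2) : Dom u v ↔ supp u.val ⊆ supp v.val := by
  constructor
  · intro h i hi
    rw [supp_mem] at hi
    have hb1 : (bVec i).val i ≠ 0 := by simp [bVec]
    have hb2 : ∀ j, (bVec i).val j ≠ 0 → j = i := by
      intro j hj
      by_contra hne
      exact hj (by simp [bVec, Pi.single_apply, hne])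
    have hin : (bVec i) = u ∨ (NZC n 2).Adj (bVec i) u := by
      by_cases he : bVec i = u
      · exact Or.inl he
      · exact Or.inr ⟨he, i, hb1, hi⟩
    rcases h _ hin with he | ⟨_, j, hj1, hj2⟩
    · rw [supp_mem, ← he]
      exact hb1
    · rw [supp_mem, ← hb2 j hj1]
      exact hj2
  · intro hsub w hw
    rcases hw with rfl | ⟨hne, i, hwi, hui⟩
    · by_cases he : w = v
      · exact Or.inl he
      · obtain ⟨i, hi⟩ := exists_supp_ne w
        exact Or.inr ⟨he, i, hi, supp_mem.mp (hsub (supp_mem.mpr hi))⟩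
    · by_cases he : w = v
      · exact Or.inl he
      · exact Or.inr ⟨he, i, hwi, supp_mem.mp (hsub (supp_mem.mpr hui))⟩

lemma dom_map (g : NZC n 2 ≃g NZC n 2) {u v : Vtx n 2} (h : Dom u v) :
    Dom (g u) (g v) := by
  intro w hw
  obtain ⟨w', rfl⟩ : ∃ w', w = g w' := ⟨g.symm w, (g.apply_symm_apply w).symm⟩
  have hw' : w' = u ∨ (NZC n 2).Adj w' u := by
    rcases hw with hw | hw
    · exact Or.inl (g.injective hw)
    · exact Or.inr (g.map_rel_iff.mp hw)
  rcases h w' hw' with h1 | h1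
  · exact Or.inl (by rw [h1])
  · exact Or.inr (g.map_rel_iff.mpr h1)

lemma supp_subset_map (g : NZC n 2 ≃g NZC n 2) (u v : Vtx n 2) :
    supp (g u).val ⊆ supp (g v).val ↔ supp u.val ⊆ supp v.val := by
  rw [← dom_iff, ← dom_iff]
  constructor
  · intro h
    have h2 := dom_map g.symm h
    rwa [g.symm_apply_apply, g.symm_apply_apply] at h2
  · exact dom_map g

lemma exists_bVec_of_min (v : Vtx n 2)
    (hmin : ∀ u : Vtx n 2, supp u.val ⊆ supp v.val → u = v) :
    ∃ l, v = bVec l := by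
  obtain ⟨i, hi⟩ := exists_supp_ne v
  refine ⟨i, ?_⟩
  have h := hmin (bVec i) ?_
  · exact h.symm
  · rw [supp_bVec]
    exact Finset.singleton_subset_iff.mpr (supp_mem.mpr hi)

/-- The chain vector with support `{0, …, k}`. -/
def cVec (k : Fin n) : Vtx n 2 :=
  ⟨fun i => if i ≤ k then 1 else 0, fun h => by
    have := congrFun h k
    simp at this⟩

lemma supp_cVec (k : Fin n) : supp (cVec k).val = Finset.Iic k := by
  ext i
  by_cases h : i ≤ k <;> simp [supp_mem, cVec, h]

/-- The coordinate-permutation automorphism of the graph. -/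
def permIso (n : ℕ) (τ : Equiv.Perm (Fin n)) : NZC n 2 ≃g NZC n 2 where
  toFun v := ⟨v.val ∘ τ, fun h => v.2 (funext fun i => by
    have := congrFun h (τ.symm i)
    simpa using this)⟩
  invFun v := ⟨v.val ∘ τ.symm, fun h => v.2 (funext fun i => by
    have := congrFun h (τ i)
    simpa using this)⟩
  left_inv v := Subtype.ext (funext fun i => by simp)
  right_inv v := Subtype.ext (funext fun i => by simp)
  map_rel_iff' := by
    intro u v
    constructor
    · rintro ⟨hne, i, hu, hv⟩
      refine ⟨fun h => hne (by rw [h]), τ i, hu, hv⟩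
    · rintro ⟨hne, i, hu, hv⟩
      refine ⟨fun h => hne (Subtype.ext ?_), τ.symm i, by simpa using hu, by simpa using hv⟩
      have := congrArg Subtype.val h
      funext j
      have := congrFun this (τ.symm j)
      simpa using this

end Aux

theorem stmt_15 (n : ℕ) (hn : 3 ≤ n) :
    IsLeast {t : ℕ | ∃ f : Vtx n 2 → Fin t,
      ∀ g : NZC n 2 ≃g NZC n 2, (∀ v, f (g v) = f v) → ∀ v, g v = v} 2 := by
  classical
  constructor
  · -- a distinguishing 2-labeling exists
    refine ⟨fun v => if ∃ k : Fin n, v = cVec k then 1 else 0, ?_⟩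
    intro g hf
    -- g maps basis vectors to basis vectors
    have hminmap : ∀ l : Fin n, ∃ i, g (bVec l) = bVec i := by
      intro l
      apply exists_bVec_of_min
      intro u hu
      obtain ⟨u', rfl⟩ : ∃ u', u = g u' := ⟨g.symm u, (g.apply_symm_apply u).symm⟩
      have h2 : supp u'.val ⊆ supp (bVec l).val :=
        (supp_subset_map g u' (bVec l)).mp hu
      have h3 : u' = bVec l := by
        apply Subtype.ext
        apply vec2_ext
        rw [supp_bVec] at h2 ⊢
        rcases Finset.subset_singleton_iff.mp h2 with h | h
        · obtain ⟨i, hi⟩ := exists_supp_ne u'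
          exact absurd (h ▸ supp_mem.mpr hi) (by simp)
        · rw [h]
      rw [h3]
    choose σ hσ using hminmap
    have hσinj : Function.Injective σ := by
      intro a b hab
      apply bVec_injective
      apply g.injective
      rw [hσ, hσ, hab]
    have hσsurj : Function.Surjective σ :=
      (Finite.injective_iff_bijective.mp hσinj).2
    -- membership transport
    have hmem : ∀ (v : Vtx n 2) (j : Fin n), σ j ∈ supp (g v).val ↔ j ∈ supp v.val := by
      intro v j
      rw [← Finset.singleton_subset_iff, ← supp_bVec, ← hσ,
          supp_subset_map, supp_bVec, Finset.singleton_subset_iff]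
    have himg : ∀ v : Vtx n 2, supp (g v).val = (supp v.val).image σ := by
      intro v
      ext i
      obtain ⟨j, rfl⟩ := hσsurj i
      rw [Finset.mem_image, hmem]
      constructor
      · intro h
        exact ⟨j, h, rfl⟩
      · rintro ⟨j', hj', hjj⟩
        rwa [← hσinj hjj]
    -- g fixes each chain vector
    have hchain : ∀ k, g (cVec k) = cVec k := by
      intro k
      have h1 := hf (cVec k)
      simp only at h1
      rw [if_pos (show ∃ k' : Fin n, cVec k = cVec k' from ⟨k, rfl⟩)] at h1
      have h2 : ∃ k', g (cVec k) = cVec k' := by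
        by_contra h
        rw [if_neg h] at h1
        exact absurd h1 (by decide)
      obtain ⟨k', hk'⟩ := h2
      have hs : (supp (cVec k).val).image σ = supp (cVec k').val := by
        rw [← himg, hk']
      have hcard := congrArg Finset.card hs
      rw [Finset.card_image_of_injective _ hσinj, supp_cVec, supp_cVec,
        Fin.card_Iic, Fin.card_Iic] at hcard
      have : k = k' := Fin.ext (by omega)
      rw [hk', this]
    -- σ fixes each initial segment, hence σ = id
    have hIic : ∀ k, (Finset.Iic k).image σ = Finset.Iic k := by
      intro k
      have h := himg (cVec k)
      rw [hchain k, supp_cVec] at h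
      exact h.symm
    have hσle : ∀ j k : Fin n, σ j ≤ k ↔ j ≤ k := by
      intro j k
      constructor
      · intro h
        have h2 : σ j ∈ Finset.Iic k := Finset.mem_Iic.mpr h
        rw [← hIic k, Finset.mem_image] at h2
        obtain ⟨j', hj', hjj⟩ := h2
        rw [← hσinj hjj]
        exact Finset.mem_Iic.mp hj'
      · intro h
        have h2 : σ j ∈ (Finset.Iic k).image σ :=
          Finset.mem_image_of_mem σ (Finset.mem_Iic.mpr h)
        rw [hIic] at h2
        exact Finset.mem_Iic.mp h2
    have hσid : σ = id := by
      funext j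
      exact le_antisymm ((hσle j j).mpr le_rfl) ((hσle j (σ j)).mp le_rfl)
    intro v
    have hsupp : supp (g v).val = supp v.val := by
      rw [himg v, hσid, Finset.image_id]
    exact Subtype.ext (vec2_ext hsupp)
  · -- no distinguishing 1-labeling
    rintro t ⟨f, hdist⟩
    by_contra hlt
    push_neg at hlt
    interval_cases t
    · exact (f (bVec ⟨0, by omega⟩)).elim0
    · set i0 : Fin n := ⟨0, by omega⟩
      set i1 : Fin n := ⟨1, by omega⟩
      have hne : i0 ≠ i1 := by
        simp [i0, i1, Fin.ext_iff]
      set τ : Equiv.Perm (Fin n) := Equiv.swap i0 i1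
      have htriv : ∀ v, f ((permIso n τ) v) = f v := fun v => Subsingleton.elim _ _
      have hfix := hdist (permIso n τ) htriv (bVec i0)
      have hval : ((permIso n τ) (bVec i0)).val = (bVec i1).val := by
        funext j
        show (bVec i0).val (τ j) = (bVec i1).val j
        simp only [bVec]
        by_cases h : j = i1
        · subst h
          rw [Equiv.swap_apply_right, Pi.single_eq_same, Pi.single_eq_same]
        · by_cases h0 : j = i0
          · subst h0
            simp [τ, Equiv.swap_apply_left, Pi.single_apply, hne, hne.symm]
          · rw [Equiv.swap_apply_of_ne_of_ne h0 h]
            simp [Pi.single_apply, h, h0]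
      have heq : (permIso n τ) (bVec i0) = bVec i1 := Subtype.ext hval
      rw [heq] at hfix
      exact hne (bVec_injective hfix).symm
end

section
/- For n ≥ 3 and q ≥ 3, the distinguishing number of the non-zero component graph of GF(q)^n equals (q-1)^n. -/
namespace NZCaux

variable {n q : ℕ}

lemma mem_supp {v : Vec n q} {i : Fin n} : i ∈ supp v ↔ v i ≠ 0 := by
  simp [supp]

lemma two_ne_zero' (hq : 3 ≤ q) : (2 : ZMod q) ≠ 0 := by
  haveI : NeZero q := ⟨by omega⟩
  intro h
  have h2 : ((2 : ℕ) : ZMod q) = 0 := by exact_mod_cast h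
  have := (ZMod.natCast_eq_zero_iff 2 q).mp h2
  exact absurd (Nat.le_of_dvd (by norm_num) this) (by omega)

lemma val_two (hq : 3 ≤ q) : (2 : ZMod q).val = 2 := by
  haveI : NeZero q := ⟨by omega⟩
  have : ((2 : ℕ) : ZMod q).val = 2 := ZMod.val_cast_of_lt (by omega)
  exact_mod_cast this

lemma one_ne_two' (hq : 3 ≤ q) : (1 : ZMod q) ≠ 2 := by
  haveI : NeZero q := ⟨by omega⟩
  haveI : Fact (1 < q) := ⟨by omega⟩
  intro h
  have := congrArg ZMod.val h
  rw [ZMod.val_one, val_two hq] at this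
  omega

/-- single vector as a vertex -/
def sgl (i : Fin n) (c : ZMod q) (hc : c ≠ 0) : Vtx n q :=
  ⟨Pi.single i c, fun h => hc (by simpa using congrFun h i)⟩

lemma supp_subset_of_adj (hq : 3 ≤ q) {u v : Vtx n q}
    (h : ∀ w, (NZC n q).Adj w u → ((NZC n q).Adj w v ∨ w = v)) :
    supp u.val ⊆ supp v.val := by
  intro i hi
  rw [mem_supp] at hi ⊢
  have key : ∀ (c : ZMod q) (hc : c ≠ 0), sgl i c hc ≠ u → v.val i ≠ 0 := by
    intro c hc hne
    have hadj : (NZC n q).Adj (sgl i c hc) u :=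
      ⟨hne, i, by simpa [sgl] using hc, hi⟩
    rcases h _ hadj with hav | rfl
    · obtain ⟨-, j, hwj, hvj⟩ := hav
      have : j = i := by
        by_contra hji
        exact hwj (by simp [sgl, Pi.single_eq_of_ne hji])
      exact this ▸ hvj
    · simpa [sgl] using hc
  have h1 : (1 : ZMod q) ≠ 0 := by
    haveI : Fact (1 < q) := ⟨by omega⟩
    exact one_ne_zero
  by_cases hc : sgl i (1 : ZMod q) h1 = u
  · refine key 2 (two_ne_zero' hq) ?_
    intro h2
    apply one_ne_two' hq
    have := congrFun (congrArg Subtype.val (hc.trans h2.symm)) i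
    simpa [sgl] using this
  · exact key 1 h1 hc

lemma adj_of_supp_subset {u v : Vtx n q} (h : supp u.val ⊆ supp v.val) :
    ∀ w, (NZC n q).Adj w u → ((NZC n q).Adj w v ∨ w = v) := by
  intro w ⟨hne, i, hwi, hui⟩
  have hvi : v.val i ≠ 0 := mem_supp.mp (h (mem_supp.mpr hui))
  by_cases hwv : w = v
  · exact Or.inr hwv
  · exact Or.inl ⟨hwv, i, hwi, hvi⟩

lemma iso_supp_subset (hq : 3 ≤ q) (g : NZC n q ≃g NZC n q) {u v : Vtx n q}
    (h : supp u.val ⊆ supp v.val) :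
    supp (g u).val ⊆ supp (g v).val := by
  apply supp_subset_of_adj hq
  intro w hw
  have hw' : (NZC n q).Adj (g.symm w) u := by
    rw [← g.map_rel_iff, g.apply_symm_apply]
    exact hw
  rcases adj_of_supp_subset h _ hw' with ha | he
  · left
    have := g.map_rel_iff.mpr ha
    rwa [g.apply_symm_apply] at this
  · right
    rw [← g.apply_symm_apply w, he]

lemma iso_supp_eq (hq : 3 ≤ q) (g : NZC n q ≃g NZC n q) {u v : Vtx n q}
    (h : supp u.val = supp v.val) :
    supp (g u).val = supp (g v).val :=
  le_antisymm (iso_supp_subset hq g h.le) (iso_supp_subset hq g h.ge)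

end NZCaux

namespace NZCaux

variable {n q : ℕ}

lemma upper (hn : 3 ≤ n) (hq : 3 ≤ q) :
    ∃ f : Vtx n q → Fin ((q-1)^n),
      ∀ g : NZC n q ≃g NZC n q, (∀ v, f (g v) = f v) → ∀ v, g v = v := by
  haveI : NeZero q := ⟨by omega⟩
  have hval : ∀ (v : Vtx n q) (i : Fin n), (v.val i).val - 1 < q - 1 := by
    intro v i
    have := ZMod.val_lt (v.val i)
    omega
  set f0 : Vtx n q → (Fin n → Fin (q-1)) := fun v i => ⟨(v.val i).val - 1, hval v i⟩ with hf0
  refine ⟨fun v => finFunctionFinEquiv (f0 v), ?_⟩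
  intro g hg
  have hg0 : ∀ v, f0 (g v) = f0 v := fun v => finFunctionFinEquiv.injective (hg v)
  have hzero : ∀ (v : Vtx n q) (i : Fin n), v.val i = 0 → (f0 v i : ℕ) = 0 := by
    intro v i h; simp [hf0, h]
  have htwo : ∀ (v : Vtx n q) (i : Fin n), v.val i = 2 → (f0 v i : ℕ) = 1 := by
    intro v i h; simp [hf0, h, val_two hq]
  -- supports are preserved
  have hsupp : ∀ v : Vtx n q, supp (g v).val = supp v.val := by
    intro v
    by_contra hne
    by_cases hsub : supp v.val ⊆ supp (g v).val
    · -- pick i ∈ supp (g v) \ supp v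
      have hns : ¬ supp (g v).val ⊆ supp v.val := fun h => hne (le_antisymm h hsub)
      obtain ⟨i, hiT, hiS⟩ := Finset.not_subset.mp hns
      set w : Vtx n q := ⟨Function.update (g v).val i 2,
        fun h0 => two_ne_zero' hq (by simpa using congrFun h0 i)⟩ with hw
      have hsw : supp w.val = supp (g v).val := by
        ext j
        rw [mem_supp, mem_supp]
        by_cases hji : j = i
        · subst hji
          simp [hw, two_ne_zero' hq, mem_supp.mp hiT]
        · simp [hw, Function.update_of_ne hji]
      have hsw' : supp (g.symm w).val = supp v.val := by
        have := iso_supp_eq hq g.symm hsw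
        rwa [g.symm_apply_apply] at this
      have h0 : (g.symm w).val i = 0 := by
        have : i ∉ supp (g.symm w).val := by rw [hsw']; exact hiS
        simpa [mem_supp] using this
      have e1 : (f0 w i : ℕ) = 1 := htwo w i (by simp [hw])
      have e0 : (f0 (g.symm w) i : ℕ) = 0 := hzero _ i h0
      have : f0 (g (g.symm w)) = f0 (g.symm w) := hg0 _
      rw [g.apply_symm_apply] at this
      rw [this] at e1
      omega
    · obtain ⟨i, hiS, hiT⟩ := Finset.not_subset.mp hsub
      set w : Vtx n q := ⟨Function.update v.val i 2,
        fun h0 => two_ne_zero' hq (by simpa using congrFun h0 i)⟩ with hw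
      have hsw : supp w.val = supp v.val := by
        ext j
        rw [mem_supp, mem_supp]
        by_cases hji : j = i
        · subst hji
          simp [hw, two_ne_zero' hq, mem_supp.mp hiS]
        · simp [hw, Function.update_of_ne hji]
      have hsw' : supp (g w).val = supp (g v).val := iso_supp_eq hq g hsw
      have h0 : (g w).val i = 0 := by
        have : i ∉ supp (g w).val := by rw [hsw']; exact hiT
        simpa [mem_supp] using this
      have e1 : (f0 w i : ℕ) = 1 := htwo w i (by simp [hw])
      have e0 : (f0 (g w) i : ℕ) = 0 := hzero _ i h0
      rw [hg0 w] at e0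
      omega
  -- conclude g = id
  intro v
  have hs := hsupp v
  have hf := hg0 v
  apply Subtype.ext
  funext i
  by_cases hz : v.val i = 0
  · have h2 : (g v).val i = 0 := by
      have : i ∉ supp (g v).val := by rw [hs]; simp [mem_supp, hz]
      simpa [mem_supp] using this
    rw [h2, hz]
  · have h1 : (g v).val i ≠ 0 := by
      have : i ∈ supp (g v).val := by rw [hs]; exact mem_supp.mpr hz
      exact mem_supp.mp this
    have hco : (f0 (g v) i : ℕ) = (f0 v i : ℕ) := by rw [hf]
    simp only [hf0] at hco
    have hv1 : (v.val i).val ≠ 0 := fun h => hz ((ZMod.val_eq_zero _).mp h)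
    have hv2 : ((g v).val i).val ≠ 0 := fun h => h1 ((ZMod.val_eq_zero _).mp h)
    exact ZMod.val_injective q (by omega)

lemma lower (hn : 3 ≤ n) (hq : 3 ≤ q) (t : ℕ) (f : Vtx n q → Fin t)
    (hf : ∀ g : NZC n q ≃g NZC n q, (∀ v, f (g v) = f v) → ∀ v, g v = v) :
    (q - 1) ^ n ≤ t := by
  by_contra hlt
  push_neg at hlt
  haveI : NeZero q := ⟨by omega⟩
  let e : (Fin n → {x : ZMod q // x ≠ 0}) → Vtx n q := fun h =>
    ⟨fun i => (h i).1, fun hz => (h ⟨0, by omega⟩).2 (congrFun hz _)⟩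
  have he : Function.Injective e := by
    intro a b hab
    funext i
    exact Subtype.ext (congrFun (congrArg Subtype.val hab) i)
  have hcard : Fintype.card (Fin n → {x : ZMod q // x ≠ 0}) = (q-1)^n := by
    simp [Fintype.card_subtype_compl, ZMod.card]
  obtain ⟨a, b, hab, hfe⟩ := Fintype.exists_ne_map_eq_of_card_lt (f ∘ e)
    (by rw [hcard]; simpa using hlt)
  set u := e a with hu
  set v := e b with hv
  have huv : u ≠ v := fun h' => hab (he h')
  have hufull : ∀ i, u.val i ≠ 0 := fun i => (a i).2
  have hvfull : ∀ i, v.val i ≠ 0 := fun i => (b i).2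
  have full_adj : ∀ x y : Vtx n q, (∀ i, x.val i ≠ 0) → ((NZC n q).Adj x y ↔ x ≠ y) := by
    intro x y hx
    constructor
    · exact fun h => h.1
    · intro hxy
      obtain ⟨i, hi⟩ := Function.ne_iff.mp y.2
      exact ⟨hxy, i, hx i, hi⟩
  have full_adj' : ∀ x y : Vtx n q, (∀ i, y.val i ≠ 0) → ((NZC n q).Adj x y ↔ x ≠ y) := by
    intro x y hy
    rw [(NZC n q).adj_comm, full_adj y x hy]
    exact ne_comm
  classical
  set σ := Equiv.swap u v with hσ
  have hσfull : ∀ x : Vtx n q, (x = u ∨ x = v) → ∀ i, (σ x).val i ≠ 0 := by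
    intro x hx i
    rcases hx with rfl | rfl
    · rw [hσ, Equiv.swap_apply_left]; exact hvfull i
    · rw [hσ, Equiv.swap_apply_right]; exact hufull i
  have hxfull : ∀ x : Vtx n q, (x = u ∨ x = v) → ∀ i, x.val i ≠ 0 := by
    intro x hx i
    rcases hx with rfl | rfl
    · exact hufull i
    · exact hvfull i
  have adj_iff : ∀ x y, (NZC n q).Adj (σ x) (σ y) ↔ (NZC n q).Adj x y := by
    intro x y
    by_cases hx : x = u ∨ x = v
    · rw [full_adj _ _ (hσfull x hx), full_adj _ _ (hxfull x hx)]
      exact not_congr σ.apply_eq_iff_eq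
    · by_cases hy : y = u ∨ y = v
      · rw [full_adj' _ _ (hσfull y hy), full_adj' _ _ (hxfull y hy)]
        exact not_congr σ.apply_eq_iff_eq
      · push_neg at hx hy
        rw [hσ, Equiv.swap_apply_of_ne_of_ne hx.1 hx.2,
          Equiv.swap_apply_of_ne_of_ne hy.1 hy.2]
  let g : NZC n q ≃g NZC n q := { toEquiv := σ, map_rel_iff' := adj_iff _ _ }
  have hfuv : f u = f v := hfe
  have hgf : ∀ w, f (g w) = f w := by
    intro w
    show f (σ w) = f w
    by_cases hw1 : w = u
    · rw [hw1, hσ, Equiv.swap_apply_left]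
      exact hfuv.symm
    · by_cases hw2 : w = v
      · rw [hw2, hσ, Equiv.swap_apply_right]
        exact hfuv
      · rw [hσ, Equiv.swap_apply_of_ne_of_ne hw1 hw2]
  have := hf g hgf u
  have hgu : g u = v := by show σ u = v; rw [hσ, Equiv.swap_apply_left]
  rw [hgu] at this
  exact huv this.symm

end NZCaux

theorem stmt_19 (n q : ℕ) (hn : 3 ≤ n) (hq : 3 ≤ q) :
    IsLeast {t : ℕ | ∃ f : Vtx n q → Fin t,
      ∀ g : NZC n q ≃g NZC n q, (∀ v, f (g v) = f v) → ∀ v, g v = v} ((q - 1) ^ n) := by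
  constructor
  · exact NZCaux.upper hn hq
  · rintro t ⟨f, hf⟩
    exact NZCaux.lower hn hq t f hf
end
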